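/- arXiv:2509.16037 — 3 statements merged into one kernel-verified Lean document; each statement's English description precedes it below -/
import Mathlib

section
/- Let h : X → ℝ and f : X → X define a discrete dynamical system x_{t+1} = f(x_t). Define ψ₀ = h and ψᵢ(x) := ψ_{i−1}(f(x)) − ψ_{i−1}(x) + γᵢ·ψ_{i−1}(x) with γᵢ ∈ (0,1] for i = 1, …, m. If x₀ satisfies ψᵢ(x₀) ≥ 0 for all i ∈ {0, …, m−1}, and ψ_m(x) ≥ 0 holds for all x in the intersection C₀ ∩ … ∩ C_{m−1} of the superlevel sets Cᵢ = {x : ψᵢ(x) ≥ 0}, then the trajectory x_t = fᵗ(x₀) satisfies x_t ∈ C₀ ∩ … ∩ C_{m−1} for all t ∈ ℕ. -/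
/-- DHOCBF safety guarantee (Theorem 1): forward invariance of the
intersection of the superlevel sets `Cᵢ = {ψᵢ ≥ 0}` under the highest-order
constraint. -/
theorem dhocbf_forward_invariance
    {X : Type*} (h : X → ℝ) (f : X → X) (m : ℕ) (hm : 1 ≤ m)
    (γ : ℕ → ℝ) (hγ : ∀ i, 1 ≤ i → i ≤ m → γ i ∈ Set.Ioc (0:ℝ) 1)
    (ψ : ℕ → X → ℝ)
    (hψ0 : ∀ x, ψ 0 x = h x)
    (hrec : ∀ i, i < m → ∀ x, ψ (i + 1) x = ψ i (f x) - ψ i x + γ (i + 1) * ψ i x)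
    (x₀ : X)
    (hinit : ∀ i, i ≤ m - 1 → 0 ≤ ψ i x₀)
    (hhigh : ∀ x, (∀ i, i ≤ m - 1 → 0 ≤ ψ i x) → 0 ≤ ψ m x) :
    ∀ t : ℕ, ∀ i, i ≤ m - 1 → 0 ≤ ψ i (f^[t] x₀) := by
  have step : ∀ x : X, (∀ i, i ≤ m - 1 → 0 ≤ ψ i x) → ∀ i, i ≤ m - 1 → 0 ≤ ψ i (f x) := by
    intro x hx i hi
    have him : i < m := lt_of_le_of_lt hi (Nat.sub_lt (by omega) one_pos)
    have hrec' := hrec i him x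
    have hsucc : 0 ≤ ψ (i + 1) x := by
      rcases eq_or_lt_of_le (Nat.succ_le_of_lt him) with heq | hlt
      · rw [show i + 1 = m from heq]; exact hhigh x hx
      · exact hx (i + 1) (by omega)
    have hγi := hγ (i + 1) (by omega) him
    have hψx := hx i hi
    have : ψ i (f x) = ψ (i + 1) x + (1 - γ (i + 1)) * ψ i x := by
      rw [hrec']; ring
    rw [this]
    have : 0 ≤ (1 - γ (i + 1)) * ψ i x :=
      mul_nonneg (by linarith [hγi.2]) hψx
    linarith
  intro t
  induction t with
  | zero => simpa using hinit
  | succ n ih =>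
    rw [Function.iterate_succ_apply']
    exact step _ ih
end

section
/- Let s ∈ ℝ², let ∂R ⊆ ℝ² be compact and nonempty, and let r_c ∈ ∂R attain the maximum of ‖r − s‖ over r ∈ ∂R. Let R_θ be the rotation by angle θ about s and v ∈ ℝ² a translation, and define T(p) = R_θ(p) + v (rotation about s then translation). Then for all p ∈ ∂R, ‖T(p) − p‖ ≤ 2·|sin(θ/2)|·‖r_c − s‖ + ‖v‖. -/
open Complex

theorem norm_exp_ofReal_mul_I_sub_one (θ : ℝ) :
    ‖exp (θ * I) - 1‖ = 2 * |Real.sin (θ / 2)| := by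
  rw [mul_comm, norm_exp_I_mul_ofReal_sub_one, norm_mul, Real.norm_two, Real.norm_eq_abs]

theorem norm_rotate_about_sub (s p : ℂ) (θ : ℝ) :
    ‖(s + exp (θ * I) * (p - s)) - p‖ = 2 * |Real.sin (θ / 2)| * ‖p - s‖ := by
  rw [show s + exp (θ * I) * (p - s) - p = (exp (θ * I) - 1) * (p - s) by ring,
    norm_mul, norm_exp_ofReal_mul_I_sub_one]

open Complex in
theorem epa_displacement_bound_general
    (s v : ℂ) (θ : ℝ)
    (bR : Set ℂ)
    (rc : ℂ)
    (hmax : ∀ r ∈ bR, ‖r - s‖ ≤ ‖rc - s‖)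
    (T : ℂ → ℂ)
    (hT : ∀ p, T p = s + Complex.exp (θ * Complex.I) * (p - s) + v) :
    ∀ p ∈ bR, ‖T p - p‖ ≤ 2 * |Real.sin (θ / 2)| * ‖rc - s‖ + ‖v‖ := by
  intro p hp
  calc ‖T p - p‖ = ‖((s + exp (θ * I) * (p - s)) - p) + v‖ := by rw [hT]; ring_nf
    _ ≤ ‖(s + exp (θ * I) * (p - s)) - p‖ + ‖v‖ := norm_add_le _ _
    _ = 2 * |Real.sin (θ / 2)| * ‖p - s‖ + ‖v‖ := by rw [norm_rotate_about_sub]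
    _ ≤ 2 * |Real.sin (θ / 2)| * ‖rc - s‖ + ‖v‖ := by gcongr; exact hmax p hp

open Complex in
/-- For rigid motion `T(p) = s + e^{iθ}(p − s) + v` (rotation by `θ`
about `s` followed by translation `v`), with `r_c` the Extreme Point Anchor of the
compact boundary `∂R`, every boundary displacement satisfies
`‖T p − p‖ ≤ 2|sin(θ/2)| ‖r_c − s‖ + ‖v‖`. (ℝ² is identified with ℂ.) -/
theorem epa_displacement_bound
    (s v : ℂ) (θ : ℝ)
    (bR : Set ℂ) (hbR : IsCompact bR) (hne : bR.Nonempty)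
    (rc : ℂ) (hrc : rc ∈ bR)
    (hmax : ∀ r ∈ bR, ‖r - s‖ ≤ ‖rc - s‖)
    (T : ℂ → ℂ)
    (hT : ∀ p, T p = s + Complex.exp (θ * Complex.I) * (p - s) + v) :
    ∀ p ∈ bR, ‖T p - p‖ ≤ 2 * |Real.sin (θ / 2)| * ‖rc - s‖ + ‖v‖ :=
  epa_displacement_bound_general s v θ bR rc hmax T hT
end

section
/- Let ψ₀ : ℕ → ℝ and define ψ₁(t) := ψ₀(t+1) + ω₁·(γ₁ − 1)·ψ₀(t) and ψ₂(t) := ψ₁(t+1) + ω₂·(γ₂ − 1)·ψ₁(t), with γ₁, γ₂ ∈ (0,1] and ω₁, ω₂ ≥ 0. If ψ₀(0) ≥ 0, ψ₁(0) ≥ 0, and ψ₂(t) ≥ 0 and ψ₁(t) ≥ 0 for all t ∈ ℕ, then ψ₀(t) ≥ 0 for all t ∈ ℕ. -/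
/-- Order-2 instance of the relaxed DHOCBF safety guarantee. -/
theorem relaxed_dhocbf_order_two
    (ψ₀ ψ₁ ψ₂ : ℕ → ℝ)
    (γ₁ γ₂ ω₁ ω₂ : ℝ)
    (hγ₁ : γ₁ ∈ Set.Ioc (0:ℝ) 1) (hγ₂ : γ₂ ∈ Set.Ioc (0:ℝ) 1)
    (hω₁ : 0 ≤ ω₁) (hω₂ : 0 ≤ ω₂)
    (hψ₁ : ∀ t, ψ₁ t = ψ₀ (t + 1) + ω₁ * (γ₁ - 1) * ψ₀ t)
    (hψ₂ : ∀ t, ψ₂ t = ψ₁ (t + 1) + ω₂ * (γ₂ - 1) * ψ₁ t)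
    (h00 : 0 ≤ ψ₀ 0) (h10 : 0 ≤ ψ₁ 0)
    (h2 : ∀ t, 0 ≤ ψ₂ t) (h1 : ∀ t, 0 ≤ ψ₁ t) :
    ∀ t, 0 ≤ ψ₀ t := by
  intro t
  induction t with
  | zero => exact h00
  | succ n ih =>
    have h := hψ₁ n
    have hc : 0 ≤ ω₁ * (1 - γ₁) * ψ₀ n :=
      mul_nonneg (mul_nonneg hω₁ (by linarith [hγ₁.2])) ih
    nlinarith [h1 n]
end
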